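/- arXiv:quant-ph/0405098 — 3 statements merged into one kernel-verified Lean document; each statement's English description precedes it below -/
import Mathlib

section
/- With the setting of the leakage lemma (H = H_1 + H_2, H_2 zero on S and ≥ J on S^⊥, J > 2K, K = ‖H_1‖), let b be the second-smallest eigenvalue of the restriction of H to S and b' the second-smallest eigenvalue of H. Then b' ≥ b - K²/(J - 2K). -/
/-!
Split a vector orthogonal to the ground state `ξ` as `x = y + z` with `y ∈ S` and `z ∈ Sᗮ`.
Since `H₂` kills `S`, the form `⟪x, H x⟫` is at least `b ‖y‖² - 2K ‖y‖ ‖z‖ + (J - K) ‖z‖²`, and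
completing the square (using `b ≤ K` and `J > 2K`) bounds this below by
`(b - K² / (J - 2K)) ‖x‖²`. A two-dimensional subspace on which the form is at most `b'` contains
such a nonzero `x`, which gives `b - K² / (J - 2K) ≤ b'`.
-/

open RCLike
open scoped InnerProductSpace

theorem sub_sq_div_mul_sq_add_sq_le {b K J : ℝ} (hJ : 2 * K < J) (hbK : b ≤ K) (s t : ℝ) :
    (b - K ^ 2 / (J - 2 * K)) * (s ^ 2 + t ^ 2) ≤ b * s ^ 2 - 2 * K * s * t + (J - K) * t ^ 2 := by
  have hJK : 0 < J - 2 * K := by linarith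
  have hJKb : 0 ≤ (J - 2 * K) * (K - b) := mul_nonneg hJK.le (by linarith)
  have key : b * s ^ 2 - 2 * K * s * t + (J - K) * t ^ 2 - (b - K ^ 2 / (J - 2 * K)) * (s ^ 2 + t ^ 2)
      = ((K * s - (J - 2 * K) * t) ^ 2 + ((J - 2 * K) * (K - b) + K ^ 2) * t ^ 2) / (J - 2 * K) := by
    field_simp
    ring
  rw [← sub_nonneg, key]
  positivity

section Leakage

variable {𝕜 E : Type*} [RCLike 𝕜] [NormedAddCommGroup E] [InnerProductSpace 𝕜 E]

theorem ContinuousLinearMap.abs_re_inner_map_le (T : E →L[𝕜] E) (u w : E) :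
    |re ⟪u, T w⟫_𝕜| ≤ ‖T‖ * ‖u‖ * ‖w‖ :=
  calc |re ⟪u, T w⟫_𝕜| ≤ ‖⟪u, T w⟫_𝕜‖ := abs_re_le_norm _
    _ ≤ ‖u‖ * ‖T w‖ := norm_inner_le_norm _ _
    _ ≤ ‖u‖ * (‖T‖ * ‖w‖) := by gcongr; exact T.le_opNorm w
    _ = ‖T‖ * ‖u‖ * ‖w‖ := by ring

theorem Submodule.exists_ne_zero_inner_eq_zero (V : Submodule 𝕜 E) [FiniteDimensional 𝕜 V]
    (hV : 1 < Module.finrank 𝕜 V) (ξ : E) : ∃ x ∈ V, x ≠ 0 ∧ ⟪ξ, x⟫_𝕜 = 0 := by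
  have hker : LinearMap.ker ((innerSL 𝕜 ξ).toLinearMap.domRestrict V) ≠ ⊥ :=
    LinearMap.ker_ne_bot_of_finrank_lt (by rwa [Module.finrank_self])
  obtain ⟨v, hv, hv0⟩ := Submodule.exists_mem_ne_zero_of_ne_bot hker
  exact ⟨v, v.2, fun h => hv0 (Subtype.ext h), hv⟩

variable [CompleteSpace E] {S : Submodule 𝕜 E} {T₁ T₂ : E →L[𝕜] E} {J : ℝ}

theorem re_inner_add_map_add_ge (hT₂ : IsSelfAdjoint T₂) (hS : ∀ y ∈ S, T₂ y = 0)
    (hSperp : ∀ z ∈ Sᗮ, J * ‖z‖ ^ 2 ≤ re ⟪z, T₂ z⟫_𝕜) {y z : E} (hy : y ∈ S) (hz : z ∈ Sᗮ) :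
    re ⟪y, (T₁ + T₂) y⟫_𝕜 - 2 * ‖T₁‖ * ‖y‖ * ‖z‖ + (J - ‖T₁‖) * ‖z‖ ^ 2
      ≤ re ⟪y + z, (T₁ + T₂) (y + z)⟫_𝕜 := by
  have hT₂y : T₂ y = 0 := hS y hy
  have hyT₂z : ⟪y, T₂ z⟫_𝕜 = 0 := by
    simpa [hT₂y] using (hT₂.isSymmetric y z).symm
  have hyz := abs_le.mp (T₁.abs_re_inner_map_le y z)
  have hzy := abs_le.mp (T₁.abs_re_inner_map_le z y)
  have hzz := abs_le.mp (T₁.abs_re_inner_map_le z z)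
  have hJz := hSperp z hz
  simp only [add_apply, map_add, inner_add_left, inner_add_right, hT₂y,
    hyT₂z, map_zero, add_zero]
  linarith

theorem re_inner_add_map_ge_of_inner_eq_zero [S.HasOrthogonalProjection]
    (hT₂ : IsSelfAdjoint T₂) (hS : ∀ y ∈ S, T₂ y = 0)
    (hSperp : ∀ z ∈ Sᗮ, J * ‖z‖ ^ 2 ≤ re ⟪z, T₂ z⟫_𝕜) (hJ : 2 * ‖T₁‖ < J)
    {ξ : E} (hξS : ξ ∈ S) {b : ℝ} (hbK : b ≤ ‖T₁‖)
    (hb : ∀ y ∈ S, ⟪ξ, y⟫_𝕜 = 0 → b * ‖y‖ ^ 2 ≤ re ⟪y, (T₁ + T₂) y⟫_𝕜)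
    {x : E} (hx : ⟪ξ, x⟫_𝕜 = 0) :
    (b - ‖T₁‖ ^ 2 / (J - 2 * ‖T₁‖)) * ‖x‖ ^ 2 ≤ re ⟪x, (T₁ + T₂) x⟫_𝕜 := by
  set y := S.starProjection x
  set z := x - y
  have hy : y ∈ S := S.starProjection_apply_mem x
  have hz : z ∈ Sᗮ := S.sub_starProjection_mem_orthogonal x
  have hξy : ⟪ξ, y⟫_𝕜 = 0 := by
    rw [← S.inner_starProjection_left_eq_right, S.starProjection_eq_self_iff.mpr hξS, hx]
  have hpyth : ‖x‖ ^ 2 = ‖y‖ ^ 2 + ‖z‖ ^ 2 := by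
    rw [sq, sq, sq, ← norm_add_sq_eq_norm_sq_add_norm_sq_of_inner_eq_zero y z
      (S.inner_right_of_mem_orthogonal hy hz), add_sub_cancel]
  calc (b - ‖T₁‖ ^ 2 / (J - 2 * ‖T₁‖)) * ‖x‖ ^ 2
      ≤ b * ‖y‖ ^ 2 - 2 * ‖T₁‖ * ‖y‖ * ‖z‖ + (J - ‖T₁‖) * ‖z‖ ^ 2 := by
        rw [hpyth]; exact sub_sq_div_mul_sq_add_sq_le hJ hbK _ _
    _ ≤ re ⟪y, (T₁ + T₂) y⟫_𝕜 - 2 * ‖T₁‖ * ‖y‖ * ‖z‖ + (J - ‖T₁‖) * ‖z‖ ^ 2 := by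
        gcongr; exact hb y hy hξy
    _ ≤ re ⟪y + z, (T₁ + T₂) (y + z)⟫_𝕜 := re_inner_add_map_add_ge hT₂ hS hSperp hy hz
    _ = re ⟪x, (T₁ + T₂) x⟫_𝕜 := by rw [add_sub_cancel]

end Leakage

theorem leakage_lemma_second_eigenvalue_general (n : ℕ)
    (H₁ H₂ : EuclideanSpace ℂ (Fin n) →L[ℂ] EuclideanSpace ℂ (Fin n))
    (hH₂ : IsSelfAdjoint H₂)
    (S : Submodule ℂ (EuclideanSpace ℂ (Fin n)))
    (hS : ∀ x ∈ S, H₂ x = 0)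
    (J K : ℝ) (hK : K = ‖H₁‖) (hJ : 2 * K < J)
    (hSperp : ∀ x ∈ Sᗮ, J * ‖x‖ ^ 2 ≤ (inner ℂ x (H₂ x) : ℂ).re)
    (b b' : ℝ) (ξ : EuclideanSpace ℂ (Fin n))
    (hξS : ξ ∈ S)
    (hb_min : ∀ x ∈ S, (inner ℂ ξ x : ℂ) = 0 →
      b * ‖x‖ ^ 2 ≤ (inner ℂ x ((H₁ + H₂) x) : ℂ).re)
    (hb_mem : ∃ x ∈ S, (inner ℂ ξ x : ℂ) = 0 ∧ ‖x‖ = 1 ∧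
      (inner ℂ x ((H₁ + H₂) x) : ℂ).re = b)
    (hb'_mem : ∃ V : Submodule ℂ (EuclideanSpace ℂ (Fin n)),
      Module.finrank ℂ V = 2 ∧ ∀ x ∈ V, (inner ℂ x ((H₁ + H₂) x) : ℂ).re ≤ b' * ‖x‖ ^ 2) :
    b - K ^ 2 / (J - 2 * K) ≤ b' := by
  subst hK
  have hbK : b ≤ ‖H₁‖ := by
    obtain ⟨w, hwS, -, hw1, rfl⟩ := hb_mem
    rw [add_apply, hS w hwS, add_zero]
    simpa [hw1] using (le_abs_self _).trans (H₁.abs_re_inner_map_le w w)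
  obtain ⟨V, hV2, hVle⟩ := hb'_mem
  obtain ⟨x, hxV, hx0, hξx⟩ := V.exists_ne_zero_inner_eq_zero (by omega) ξ
  refine le_of_mul_le_mul_right ?_ (by positivity : 0 < ‖x‖ ^ 2)
  exact (re_inner_add_map_ge_of_inner_eq_zero hH₂ hS hSperp hJ hξS hbK hb_min hξx).trans
    (hVle x hxV)

/-- **Leakage lemma, second eigenvalue part.** With `H = H₁ + H₂`, `H₂` vanishing on `S`
and at least `J` on `Sᗮ`, `J > 2K`, `K = ‖H₁‖`: if `a` and `b` are the smallest and
second-smallest eigenvalues of the restriction of `H` to `S` (with ground state `ξ`),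
and `b'` is the second-smallest eigenvalue of `H` (characterized via Courant–Fischer by
a two-dimensional subspace on which the Rayleigh quotient is at most `b'`), then
`b' ≥ b - K²/(J - 2K)`. -/
theorem leakage_lemma_second_eigenvalue (n : ℕ)
    (H₁ H₂ : EuclideanSpace ℂ (Fin n) →L[ℂ] EuclideanSpace ℂ (Fin n))
    (hH₁ : IsSelfAdjoint H₁) (hH₂ : IsSelfAdjoint H₂)
    (S : Submodule ℂ (EuclideanSpace ℂ (Fin n)))
    (hS : ∀ x ∈ S, H₂ x = 0)
    (J K : ℝ) (hK : K = ‖H₁‖) (hJ : 2 * K < J)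
    (hSperp : ∀ x ∈ Sᗮ, J * ‖x‖ ^ 2 ≤ (inner ℂ x (H₂ x) : ℂ).re)
    (a b b' : ℝ) (ξ : EuclideanSpace ℂ (Fin n))
    (hξS : ξ ∈ S) (hξ : ‖ξ‖ = 1)
    (ha_min : ∀ x ∈ S, ‖x‖ = 1 → a ≤ (inner ℂ x ((H₁ + H₂) x) : ℂ).re)
    (hξa : (inner ℂ ξ ((H₁ + H₂) ξ) : ℂ).re = a)
    (hb_min : ∀ x ∈ S, (inner ℂ ξ x : ℂ) = 0 →
      b * ‖x‖ ^ 2 ≤ (inner ℂ x ((H₁ + H₂) x) : ℂ).re)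
    (hb_mem : ∃ x ∈ S, (inner ℂ ξ x : ℂ) = 0 ∧ ‖x‖ = 1 ∧
      (inner ℂ x ((H₁ + H₂) x) : ℂ).re = b)
    (hb'_mem : ∃ V : Submodule ℂ (EuclideanSpace ℂ (Fin n)),
      Module.finrank ℂ V = 2 ∧ ∀ x ∈ V, (inner ℂ x ((H₁ + H₂) x) : ℂ).re ≤ b' * ‖x‖ ^ 2)
    (hb'_min : ∀ V : Submodule ℂ (EuclideanSpace ℂ (Fin n)),
      Module.finrank ℂ V = 2 →
      ∃ x ∈ V, x ≠ 0 ∧ b' * ‖x‖ ^ 2 ≤ (inner ℂ x ((H₁ + H₂) x) : ℂ).re) :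
    b - K ^ 2 / (J - 2 * K) ≤ b' :=
  leakage_lemma_second_eigenvalue_general n H₁ H₂ hH₂ S hS J K hK hJ hSperp b b' ξ hξS hb_min hb_mem
    hb'_mem
end

section
/- With the setting of the leakage lemma, suppose additionally b > a (the restriction H_S has a unique ground state ξ) and let ξ' be a ground state of H. Then |⟨ξ|ξ'⟩|² ≥ 1 - K²/((b - a)(J - 2K)). -/
/-!
Split `ξ' = c • ξ + w + q` with `w ∈ S` orthogonal to `ξ` and `q ∈ Sᗮ`, so that
`‖c‖² = 1 - ‖w‖² - ‖q‖²`. Since `ξ` minimises the quadratic form of `H` on `S`, it is an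
eigenvector of the compression of `H` to `S`, so `H ξ` has no component along `w`. Pairing
`H ξ' = a' • ξ'` with `w` and with `q`, and using that the off-diagonal blocks of `H` are those of
`H₁`, gives `(b - a') ‖w‖² ≤ K ‖w‖ ‖q‖` and `(J - K - a') ‖q‖² ≤ K ‖q‖`. With `a' ≤ a` and
`b ≤ K` this is `(b - a) ‖w‖ ≤ K ‖q‖` and `(J - 2K + b - a) ‖q‖ ≤ K`, whence
`‖w‖² + ‖q‖² ≤ K² / ((b - a)(J - 2K))`.
-/

open RCLike Metric ContinuousLinearMap
open scoped InnerProductSpace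

variable {𝕜 E : Type*} [RCLike 𝕜] [NormedAddCommGroup E] [InnerProductSpace 𝕜 E]

theorem ContinuousLinearMap.IsPositive.apply_eq_zero_of_reApplyInnerSelf_eq_zero [CompleteSpace E]
    {A : E →L[𝕜] E} (hA : A.IsPositive) {x : E} (hx : A.reApplyInnerSelf x = 0) : A x = 0 := by
  have hmin : IsMinOn A.reApplyInnerSelf (sphere 0 ‖x‖) x := fun y _ => by
    simpa [hx] using hA.2 y
  rw [hA.isSelfAdjoint.eq_smul_self_of_isLocalExtrOn (Or.inl hmin.localize),
    ContinuousLinearMap.rayleighQuotient, hx, zero_div, ofReal_zero, zero_smul]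

theorem IsSelfAdjoint.starProjection_apply_eq_smul_of_forall_le [CompleteSpace E]
    {T : E →L[𝕜] E} (hT : IsSelfAdjoint T) {S : Submodule 𝕜 E} [S.HasOrthogonalProjection]
    {a : ℝ} {ξ : E} (hξS : ξ ∈ S) (hmin : ∀ y ∈ S, a * ‖y‖ ^ 2 ≤ re ⟪y, T y⟫_𝕜)
    (hξ : re ⟪ξ, T ξ⟫_𝕜 = a * ‖ξ‖ ^ 2) :
    S.starProjection (T ξ) = (a : 𝕜) • ξ := by
  -- `A` is positive and its form vanishes at `ξ`, so `A ξ = 0`.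
  set A := S.starProjection ∘L (T - (a : 𝕜) • 1) ∘L S.starProjection
  have hA_apply : ∀ y, A.reApplyInnerSelf y =
      re ⟪S.starProjection y, T (S.starProjection y)⟫_𝕜 - a * ‖S.starProjection y‖ ^ 2 := by
    intro y
    rw [reApplyInnerSelf_apply, comp_apply, Submodule.inner_starProjection_left_eq_right,
      inner_re_symm]
    simp [inner_sub_right, inner_smul_right, inner_self_eq_norm_sq_to_K]
  have hA : A.IsPositive := by
    have ha : IsSelfAdjoint ((a : 𝕜) • (1 : E →L[𝕜] E)) :=
      (show IsSelfAdjoint (a : 𝕜) from conj_ofReal a).smul (.one _)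
    refine isPositive_def'.2 ⟨(hT.sub ha).conj_starProjection S, fun y => ?_⟩
    rw [hA_apply]
    linarith [hmin _ (S.starProjection_apply_mem y)]
  have hAξ := hA.apply_eq_zero_of_reApplyInnerSelf_eq_zero (x := ξ) (by
    rw [hA_apply, Submodule.starProjection_eq_self_iff.2 hξS, hξ, sub_self])
  simpa [A, Submodule.starProjection_eq_self_iff.2 hξS, sub_eq_zero] using hAξ

theorem ContinuousLinearMap.mul_norm_sq_le_re_inner_of_forall_norm_eq_one {T : E →L[𝕜] E}
    {S : Submodule 𝕜 E} {a : ℝ} (h : ∀ x ∈ S, ‖x‖ = 1 → a ≤ re ⟪x, T x⟫_𝕜) {y : E}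
    (hy : y ∈ S) : a * ‖y‖ ^ 2 ≤ re ⟪y, T y⟫_𝕜 := by
  rcases eq_or_ne y 0 with rfl | hy0
  · simp
  have hre : ∀ x, re ⟪x, T x⟫_𝕜 = T.reApplyInnerSelf x := fun x => by
    rw [reApplyInnerSelf_apply, inner_re_symm]
  have hunit := h _ (S.smul_mem (‖y‖⁻¹ : 𝕜) hy) (norm_smul_inv_norm hy0)
  rw [hre, reApplyInnerSelf_smul, norm_inv, norm_ofReal, abs_norm, ← hre] at hunit
  have hpos : 0 < ‖y‖ ^ 2 := by positivity
  rwa [inv_pow, inv_mul_eq_div, le_div_iff₀ hpos] at hunit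

theorem ContinuousLinearMap.abs_re_inner_apply_le (T : E →L[𝕜] E) (u v : E) :
    |re ⟪u, T v⟫_𝕜| ≤ ‖T‖ * ‖u‖ * ‖v‖ :=
  calc |re ⟪u, T v⟫_𝕜| ≤ ‖u‖ * ‖T v‖ := (abs_re_le_norm _).trans (norm_inner_le_norm _ _)
    _ ≤ ‖u‖ * (‖T‖ * ‖v‖) := by gcongr; exact T.le_opNorm v
    _ = ‖T‖ * ‖u‖ * ‖v‖ := by ring

theorem ContinuousLinearMap.re_inner_apply_self_sub_eq_of_apply_add_eq_smul {T : E →L[𝕜] E}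
    {u v : E} {μ : ℝ} (h : T (u + v) = (μ : 𝕜) • (u + v)) (huv : ⟪u, v⟫_𝕜 = 0) :
    re ⟪u, T u⟫_𝕜 - μ * ‖u‖ ^ 2 = -re ⟪u, T v⟫_𝕜 := by
  have := congrArg (fun z => re ⟪u, z⟫_𝕜) h
  simp only [map_add, inner_add_right, inner_smul_right, huv, add_zero,
    inner_self_eq_norm_sq_to_K] at this
  rw [← ofReal_pow, ← ofReal_mul, ofReal_re] at this
  linarith

theorem Submodule.exists_eq_inner_smul_add_add_of_mem {S : Submodule 𝕜 E}
    [S.HasOrthogonalProjection] {ξ : E} (hξS : ξ ∈ S) (hξ : ‖ξ‖ = 1) (ξ' : E) :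
    ∃ w ∈ S, ∃ q ∈ Sᗮ, ⟪ξ, w⟫_𝕜 = 0 ∧ ξ' = ⟪ξ, ξ'⟫_𝕜 • ξ + w + q := by
  refine ⟨S.starProjection ξ' - ⟪ξ, ξ'⟫_𝕜 • ξ, S.sub_mem (S.starProjection_apply_mem ξ')
    (S.smul_mem _ hξS), ξ' - S.starProjection ξ', S.sub_starProjection_mem_orthogonal ξ', ?_,
    by abel⟩
  rw [inner_sub_right, inner_smul_right, inner_self_eq_norm_sq_to_K, hξ,
    ← S.inner_starProjection_left_eq_right, S.starProjection_eq_self_iff.2 hξS]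
  simp

theorem Submodule.norm_smul_add_add_sq {S : Submodule 𝕜 E} {ξ w q : E} (c : 𝕜) (hξS : ξ ∈ S)
    (hξ : ‖ξ‖ = 1) (hw : w ∈ S) (hξw : ⟪ξ, w⟫_𝕜 = 0) (hq : q ∈ Sᗮ) :
    ‖c • ξ + w + q‖ ^ 2 = ‖c‖ ^ 2 + ‖w‖ ^ 2 + ‖q‖ ^ 2 := by
  have hp : ⟪c • ξ + w, q⟫_𝕜 = 0 :=
    S.inner_right_of_mem_orthogonal (S.add_mem (S.smul_mem c hξS) hw) hq
  rw [norm_add_sq (𝕜 := 𝕜), hp, norm_add_sq (𝕜 := 𝕜), inner_smul_left, hξw, norm_smul, hξ]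
  simp

section Leakage

variable {H₁ H₂ : E →L[𝕜] E} {S : Submodule 𝕜 E}

theorem sub_mul_norm_sq_le_of_mem [S.HasOrthogonalProjection]
    (hH₂ : (H₂ : E →ₗ[𝕜] E).IsSymmetric) (hS : ∀ x ∈ S, H₂ x = 0) {ξ w q : E} {c : 𝕜}
    {a b μ : ℝ} (heig : (H₁ + H₂) (c • ξ + w + q) = (μ : 𝕜) • (c • ξ + w + q))
    (hξ : S.starProjection ((H₁ + H₂) ξ) = (a : 𝕜) • ξ) (hw : w ∈ S) (hξw : ⟪ξ, w⟫_𝕜 = 0)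
    (hq : q ∈ Sᗮ) (hb : b * ‖w‖ ^ 2 ≤ re ⟪w, (H₁ + H₂) w⟫_𝕜) :
    (b - μ) * ‖w‖ ^ 2 ≤ ‖H₁‖ * ‖w‖ * ‖q‖ := by
  have hwξ : ⟪w, ξ⟫_𝕜 = 0 := inner_eq_zero_symm.1 hξw
  have hwq : ⟪w, q⟫_𝕜 = 0 := S.inner_right_of_mem_orthogonal hw hq
  have hwHξ : ⟪w, (H₁ + H₂) ξ⟫_𝕜 = 0 := by
    rw [← S.starProjection_eq_self_iff.2 hw, S.inner_starProjection_left_eq_right, hξ,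
      inner_smul_right, hwξ, mul_zero]
  have hwH₂q : ⟪w, H₂ q⟫_𝕜 = 0 := by
    rw [← coe_coe, ← hH₂ w q, coe_coe, hS w hw, inner_zero_left]
  have hsplit := re_inner_apply_self_sub_eq_of_apply_add_eq_smul (u := w) (v := c • ξ + q)
    (by rwa [show w + (c • ξ + q) = c • ξ + w + q by abel])
    (by rw [inner_add_right, inner_smul_right, hwξ, hwq, mul_zero, add_zero])
  rw [map_add, map_smul, inner_add_right, inner_smul_right, hwHξ, mul_zero, zero_add,
    add_apply H₁ H₂ q, inner_add_right, hwH₂q, add_zero] at hsplit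
  linarith [(abs_le.1 (H₁.abs_re_inner_apply_le w q)).1]

theorem sub_mul_norm_sq_le_of_mem_orthogonal (hS : ∀ x ∈ S, H₂ x = 0) {p q : E} {J μ : ℝ}
    (heig : (H₁ + H₂) (p + q) = (μ : 𝕜) • (p + q)) (hp : p ∈ S) (hq : q ∈ Sᗮ)
    (hpq : ‖p + q‖ = 1) (hJ : J * ‖q‖ ^ 2 ≤ re ⟪q, H₂ q⟫_𝕜) :
    (J - ‖H₁‖ - μ) * ‖q‖ ^ 2 ≤ ‖H₁‖ * ‖q‖ := by
  have hqp : ⟪q, p⟫_𝕜 = 0 := S.inner_left_of_mem_orthogonal hp hq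
  have hp1 : ‖p‖ ≤ 1 := by
    have := norm_add_sq (𝕜 := 𝕜) q p
    rw [hqp, map_zero, mul_zero, add_zero, add_comm q, hpq] at this
    nlinarith [sq_nonneg ‖q‖, norm_nonneg p]
  have hsplit := re_inner_apply_self_sub_eq_of_apply_add_eq_smul (u := q) (v := p)
    (by rwa [add_comm q]) hqp
  rw [add_apply H₁ H₂ p, add_apply H₁ H₂ q, inner_add_right, inner_add_right, hS p hp,
    inner_zero_right, add_zero, map_add] at hsplit
  have hqp_le : ‖H₁‖ * ‖q‖ * ‖p‖ ≤ ‖H₁‖ * ‖q‖ := mul_le_of_le_one_right (by positivity) hp1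
  linarith [(abs_le.1 (H₁.abs_re_inner_apply_le q q)).1,
    (abs_le.1 (H₁.abs_re_inner_apply_le q p)).1]

end Leakage

theorem sq_add_sq_le_div_mul {B D K x y : ℝ} (hB : 0 < B) (hD : 0 < D) (hK : 0 ≤ K) (hx : 0 ≤ x)
    (hy : 0 ≤ y) (hxy : B * x ^ 2 ≤ K * x * y) (hyK : (D + B) * y ^ 2 ≤ K * y)
    (h1 : x ^ 2 + y ^ 2 ≤ 1) :
    x ^ 2 + y ^ 2 ≤ K ^ 2 / (B * D) := by
  rw [le_div_iff₀ (by positivity)]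
  -- If `B D ≤ K²` the bound is at least `1`; otherwise `D (K² + B²) ≤ B (D + B)²`.
  by_cases hKBD : B * D ≤ K ^ 2
  · nlinarith
  push Not at hKBD
  have hBx : B * x ≤ K * y := by
    rcases hx.eq_or_lt with rfl | hx0
    · simpa using mul_nonneg hK hy
    · nlinarith
  have hyK' : (D + B) * y ≤ K := by
    rcases hy.eq_or_lt with rfl | hy0
    · simpa using hK
    · nlinarith
  have hx2 : B ^ 2 * (x ^ 2 + y ^ 2) ≤ (K ^ 2 + B ^ 2) * y ^ 2 := by
    nlinarith [mul_le_mul hBx hBx (by positivity) (by positivity)]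
  have hy2 : D * (K ^ 2 + B ^ 2) * y ^ 2 ≤ B * K ^ 2 :=
    calc D * (K ^ 2 + B ^ 2) * y ^ 2 ≤ B * (D + B) ^ 2 * y ^ 2 :=
          mul_le_mul_of_nonneg_right (by nlinarith) (sq_nonneg y)
      _ = B * ((D + B) * y) ^ 2 := by ring
      _ ≤ B * K ^ 2 := by gcongr
  nlinarith

/-- **Leakage lemma, overlap part.** With `H = H₁ + H₂`, `H₂` vanishing on `S` and at
least `J` on `Sᗮ`, `J > 2K`, `K = ‖H₁‖`: if the restriction of `H` to `S` has lowest
eigenvalue `a` with unique unit ground state `ξ` and second-lowest eigenvalue `b > a`,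
and `ξ'` is a unit ground state of `H` (with lowest eigenvalue `a'`), then
`|⟨ξ|ξ'⟩|² ≥ 1 - K²/((b - a)(J - 2K))`. -/
theorem leakage_lemma_ground_state_overlap (n : ℕ)
    (H₁ H₂ : EuclideanSpace ℂ (Fin n) →L[ℂ] EuclideanSpace ℂ (Fin n))
    (hH₁ : IsSelfAdjoint H₁) (hH₂ : IsSelfAdjoint H₂)
    (S : Submodule ℂ (EuclideanSpace ℂ (Fin n)))
    (hS : ∀ x ∈ S, H₂ x = 0)
    (J K : ℝ) (hK : K = ‖H₁‖) (hJ : 2 * K < J)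
    (hSperp : ∀ x ∈ Sᗮ, J * ‖x‖ ^ 2 ≤ (inner ℂ x (H₂ x) : ℂ).re)
    (a b a' : ℝ) (hab : a < b)
    (ξ ξ' : EuclideanSpace ℂ (Fin n))
    (hξS : ξ ∈ S) (hξ : ‖ξ‖ = 1)
    (ha_min : ∀ x ∈ S, ‖x‖ = 1 → a ≤ (inner ℂ x ((H₁ + H₂) x) : ℂ).re)
    (hξa : (inner ℂ ξ ((H₁ + H₂) ξ) : ℂ).re = a)
    (hb_min : ∀ x ∈ S, (inner ℂ ξ x : ℂ) = 0 →
      b * ‖x‖ ^ 2 ≤ (inner ℂ x ((H₁ + H₂) x) : ℂ).re)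
    (hb_mem : ∃ x ∈ S, (inner ℂ ξ x : ℂ) = 0 ∧ ‖x‖ = 1 ∧
      (inner ℂ x ((H₁ + H₂) x) : ℂ).re = b)
    (hξ' : ‖ξ'‖ = 1)
    (hξ'eig : (H₁ + H₂) ξ' = (a' : ℂ) • ξ')
    (ha'_min : ∀ x : EuclideanSpace ℂ (Fin n), ‖x‖ = 1 →
      a' ≤ (inner ℂ x ((H₁ + H₂) x) : ℂ).re) :
    1 - K ^ 2 / ((b - a) * (J - 2 * K)) ≤ ‖(inner ℂ ξ ξ' : ℂ)‖ ^ 2 := by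
  subst hK
  have ha'a : a' ≤ a := hξa ▸ ha'_min ξ hξ
  have hbK : b ≤ ‖H₁‖ := by
    obtain ⟨x, hxS, -, hx1, rfl⟩ := hb_mem
    simpa [hS x hxS, hx1] using (abs_le.1 (H₁.abs_re_inner_apply_le x x)).2
  have hξ_ground : S.starProjection ((H₁ + H₂) ξ) = (a : ℂ) • ξ :=
    (hH₁.add hH₂).starProjection_apply_eq_smul_of_forall_le hξS
      (fun y hy => (H₁ + H₂).mul_norm_sq_le_re_inner_of_forall_norm_eq_one ha_min hy)
      (by rw [hξ, one_pow, mul_one]; exact hξa)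
  obtain ⟨w, hw, q, hq, hξw, hdecomp⟩ := S.exists_eq_inner_smul_add_add_of_mem hξS hξ ξ'
  set c := inner ℂ ξ ξ'
  rw [hdecomp] at hξ' hξ'eig
  have hw_bound := sub_mul_norm_sq_le_of_mem hH₂.isSymmetric hS hξ'eig hξ_ground hw hξw hq
    (hb_min w hw hξw)
  have hq_bound := sub_mul_norm_sq_le_of_mem_orthogonal hS hξ'eig
    (S.add_mem (S.smul_mem c hξS) hw) hq hξ' (hSperp q hq)
  have hnorm := S.norm_smul_add_add_sq c hξS hξ hw hξw hq
  rw [hξ', one_pow] at hnorm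
  have hleak := sq_add_sq_le_div_mul (D := J - 2 * ‖H₁‖) (sub_pos.2 hab) (by linarith)
    (norm_nonneg H₁) (norm_nonneg w) (norm_nonneg q) (by nlinarith [sq_nonneg ‖w‖])
    (by nlinarith [sq_nonneg ‖q‖]) (by nlinarith [sq_nonneg ‖c‖])
  linarith
end

section
/- Let S_0 be the (L+1)-dimensional subspace spanned by the states |γ_ℓ⟩ = (U_ℓ···U_1|0^n⟩) ⊗ |1^ℓ 0^{L−ℓ}⟩, ℓ = 0,...,L. Then for every s ∈ [0,1], the interpolating Hamiltonian H(s) = (1−s)H_init + s H_final maps S_0 into S_0, and in the orthonormal basis |γ_0⟩,...,|γ_L⟩ the restriction of H(s) to S_0 is the (L+1)×(L+1) matrix (1−s)·diag(0,1,...,1) + s·A, where A is the tridiagonal matrix with diagonal (1/2,1,...,1,1/2) and off-diagonal entries −1/2. -/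
open scoped ComplexOrder Matrix

/-! The subspace `S₀` spanned by the states `|γ_ℓ⟩ = |α(ℓ)⟩ ⊗ |1^ℓ 0^(L-ℓ)⟩` is
invariant under the interpolating Hamiltonian `H(s) = (1-s)H_init + s·H_final`, and in
the orthonormal basis `|γ₀⟩, …, |γ_L⟩` its restriction to `S₀` is
`(1-s)·diag(0,1,…,1) + s·A`, with `A` tridiagonal with diagonal `(1/2,1,…,1,1/2)` and
off-diagonal entries `-1/2`. -/

def vclk {L : ℕ} (c : Fin L → Bool) (j : ℤ) : Bool :=
  if j < 0 then true else if h : j.toNat < L then c ⟨j.toNat, h⟩ else false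

def agreeOff {L : ℕ} (c c' : Fin L → Bool) (T : Finset ℤ) : Prop :=
  ∀ j : Fin L, ((j : ℕ) : ℤ) ∉ T → c j = c' j

instance {L : ℕ} (c c' : Fin L → Bool) (T : Finset ℤ) : Decidable (agreeOff c c' T) := by
  unfold agreeOff; infer_instance

/-- The unary clock state `|1^ℓ 0^(L-ℓ)⟩`. -/
def clk (L : ℕ) (ℓ : ℕ) : Fin L → Bool := fun j => decide ((j : ℕ) < ℓ)

/-- The propagation term `H_ℓ` (with virtual boundary convention for `ℓ = 1, L`). -/
noncomputable def Hprop (n L : ℕ) (U : ℕ → Matrix (Fin n → Bool) (Fin n → Bool) ℂ)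
    (ℓ : ℕ) :
    Matrix ((Fin n → Bool) × (Fin L → Bool)) ((Fin n → Bool) × (Fin L → Bool)) ℂ :=
  Matrix.of fun p q =>
    (if p.1 = q.1 ∧ p.2 = q.2 ∧ vclk p.2 ((ℓ : ℤ) - 2) = true ∧
        vclk p.2 ((ℓ : ℤ) - 1) = false ∧ vclk p.2 (ℓ : ℤ) = false then 1 else 0)
    - (if vclk p.2 ((ℓ : ℤ) - 2) = true ∧ vclk p.2 ((ℓ : ℤ) - 1) = true ∧
          vclk p.2 (ℓ : ℤ) = false ∧
          vclk q.2 ((ℓ : ℤ) - 2) = true ∧ vclk q.2 ((ℓ : ℤ) - 1) = false ∧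
          vclk q.2 (ℓ : ℤ) = false ∧
          agreeOff p.2 q.2 {(ℓ : ℤ) - 2, (ℓ : ℤ) - 1, (ℓ : ℤ)}
        then U ℓ p.1 q.1 else 0)
    - (if vclk p.2 ((ℓ : ℤ) - 2) = true ∧ vclk p.2 ((ℓ : ℤ) - 1) = false ∧
          vclk p.2 (ℓ : ℤ) = false ∧
          vclk q.2 ((ℓ : ℤ) - 2) = true ∧ vclk q.2 ((ℓ : ℤ) - 1) = true ∧
          vclk q.2 (ℓ : ℤ) = false ∧
          agreeOff p.2 q.2 {(ℓ : ℤ) - 2, (ℓ : ℤ) - 1, (ℓ : ℤ)}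
        then star (U ℓ q.1 p.1) else 0)
    + (if p.1 = q.1 ∧ p.2 = q.2 ∧ vclk p.2 ((ℓ : ℤ) - 2) = true ∧
        vclk p.2 ((ℓ : ℤ) - 1) = true ∧ vclk p.2 (ℓ : ℤ) = false then 1 else 0)

noncomputable def Hclock (n L : ℕ) :
    Matrix ((Fin n → Bool) × (Fin L → Bool)) ((Fin n → Bool) × (Fin L → Bool)) ℂ :=
  Matrix.of fun p q =>
    ∑ j ∈ Finset.range (L - 1),
      if p = q ∧ vclk p.2 (j : ℤ) = false ∧ vclk p.2 ((j : ℤ) + 1) = true then 1 else 0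

noncomputable def Hinput (n L : ℕ) :
    Matrix ((Fin n → Bool) × (Fin L → Bool)) ((Fin n → Bool) × (Fin L → Bool)) ℂ :=
  Matrix.of fun p q =>
    ∑ i : Fin n, if p = q ∧ p.1 i = true ∧ vclk p.2 (0 : ℤ) = false then 1 else 0

noncomputable def Hclockinit (n L : ℕ) :
    Matrix ((Fin n → Bool) × (Fin L → Bool)) ((Fin n → Bool) × (Fin L → Bool)) ℂ :=
  Matrix.of fun p q => if p = q ∧ vclk p.2 (0 : ℤ) = true then 1 else 0

noncomputable def Hinit (n L : ℕ) :
    Matrix ((Fin n → Bool) × (Fin L → Bool)) ((Fin n → Bool) × (Fin L → Bool)) ℂ :=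
  Hclockinit n L + Hinput n L + Hclock n L

noncomputable def Hfinal (n L : ℕ) (U : ℕ → Matrix (Fin n → Bool) (Fin n → Bool) ℂ) :
    Matrix ((Fin n → Bool) × (Fin L → Bool)) ((Fin n → Bool) × (Fin L → Bool)) ℂ :=
  (1 / 2 : ℂ) • (∑ ℓ ∈ Finset.Icc 1 L, Hprop n L U ℓ) + Hinput n L + Hclock n L

/-- The interpolating Hamiltonian `H(s) = (1-s)·H_init + s·H_final`. -/
noncomputable def Hs (n L : ℕ) (U : ℕ → Matrix (Fin n → Bool) (Fin n → Bool) ℂ)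
    (s : ℝ) :
    Matrix ((Fin n → Bool) × (Fin L → Bool)) ((Fin n → Bool) × (Fin L → Bool)) ℂ :=
  ((1 - s : ℝ) : ℂ) • Hinit n L + (s : ℂ) • Hfinal n L U

/-- `α ℓ = U_ℓ ⋯ U_1 |0^n⟩`. -/
noncomputable def alpha (n : ℕ) (U : ℕ → Matrix (Fin n → Bool) (Fin n → Bool) ℂ) :
    ℕ → (Fin n → Bool) → ℂ
  | 0 => fun x => if x = fun _ => false then 1 else 0
  | ℓ + 1 => (U (ℓ + 1)).mulVec (alpha n U ℓ)

/-- `|γ_ℓ⟩ = |α(ℓ)⟩ ⊗ |1^ℓ 0^(L-ℓ)⟩`. -/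
noncomputable def gammaVec (n L : ℕ) (U : ℕ → Matrix (Fin n → Bool) (Fin n → Bool) ℂ)
    (ℓ : ℕ) : (Fin n → Bool) × (Fin L → Bool) → ℂ :=
  fun p => if p.2 = clk L ℓ then alpha n U ℓ p.1 else 0

section Helpers
variable {n L : ℕ} {U : ℕ → Matrix (Fin n → Bool) (Fin n → Bool) ℂ}

lemma vclk_clk {L ℓ : ℕ} (hℓ : ℓ ≤ L) (j : ℤ) :
    vclk (clk L ℓ) j = decide (j < (ℓ : ℤ)) := by
  unfold vclk clk
  split_ifs with h1 h2
  · symm; rw [decide_eq_true_iff]; omega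
  · simp only [decide_eq_decide]; omega
  · symm; rw [decide_eq_false_iff_not]; omega

lemma vclk_fin {L : ℕ} (c : Fin L → Bool) (j : Fin L) (t : ℤ) (h : t = ((j : ℕ) : ℤ)) :
    vclk c t = c j := by
  subst h
  unfold vclk
  rw [if_neg (by omega), dif_pos (by simp [j.isLt])]
  congr 1

lemma clk_inj {L i j : ℕ} (hi : i ≤ L) (hj : j ≤ L) (h : clk L i = clk L j) : i = j := by
  by_contra hne
  rcases Nat.lt_or_ge i j with hlt | hge
  · have := congrFun h ⟨i, by omega⟩
    simp [clk] at this; omega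
  · have hlt : j < i := by omega
    have := congrFun h ⟨j, by omega⟩
    simp [clk] at this; omega

lemma clock_det {L ℓ' m : ℕ} (h1 : 1 ≤ ℓ') (h2 : ℓ' ≤ L) {c : Fin L → Bool} {b : Bool}
    (hm : m + 1 = ℓ' ∨ m = ℓ')
    (ht : vclk c ((ℓ' : ℤ) - 2) = true) (hb : vclk c ((ℓ' : ℤ) - 1) = b)
    (hf : vclk c (ℓ' : ℤ) = false)
    (ha : agreeOff c (clk L m) {(ℓ' : ℤ) - 2, (ℓ' : ℤ) - 1, (ℓ' : ℤ)}) :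
    c = clk L (if b then ℓ' else ℓ' - 1) := by
  funext j
  have hjL := j.isLt
  show c j = decide ((j : ℕ) < (if b then ℓ' else ℓ' - 1))
  have hm' : ∀ P : ℕ → Prop, (∀ k, (k + 1 = ℓ' ∨ k = ℓ') → P k) → P m := fun P h => h m hm
  rcases lt_trichotomy (((j : ℕ) : ℤ)) ((ℓ' : ℤ) - 2) with hlt | heq | hgt
  · have hc : c j = clk L m j := ha j (by simp; omega)
    rw [hc]
    show decide ((j:ℕ) < m) = _
    simp only [decide_eq_decide]
    cases b <;> simp <;> omega
  · have hc : c j = true := (vclk_fin c j _ (by omega)).symm.trans ht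
    rw [hc]; symm; rw [decide_eq_true_iff]
    cases b <;> simp <;> omega
  · rcases lt_trichotomy (((j : ℕ) : ℤ)) ((ℓ' : ℤ) - 1) with h3 | h3 | h3
    · omega
    · have hc : c j = b := (vclk_fin c j _ (by omega)).symm.trans hb
      rw [hc]
      cases b <;> simp <;> omega
    · rcases lt_trichotomy (((j : ℕ) : ℤ)) ((ℓ' : ℤ)) with h4 | h4 | h4
      · omega
      · have hc : c j = false := (vclk_fin c j _ (by omega)).symm.trans hf
        rw [hc]; symm; rw [decide_eq_false_iff_not]
        cases b <;> simp <;> omega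
      · have hc : c j = clk L m j := ha j (by simp; omega)
        rw [hc]
        show decide ((j:ℕ) < m) = _
        simp only [decide_eq_decide]
        cases b <;> simp <;> omega

lemma alpha_norm (hU : ∀ ℓ, U ℓ ∈ Matrix.unitaryGroup (Fin n → Bool) ℂ) (ℓ : ℕ) :
    star (alpha n U ℓ) ⬝ᵥ alpha n U ℓ = 1 := by
  induction ℓ with
  | zero =>
      simp [alpha, dotProduct, apply_ite (star : ℂ → ℂ), ite_mul, mul_ite,
        Finset.sum_ite_eq']
  | succ m ih =>
      have h1 : (U (m + 1))ᴴ * U (m + 1) = 1 := by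
        have := Matrix.mem_unitaryGroup_iff'.mp (hU (m + 1))
        simpa [Matrix.star_eq_conjTranspose] using this
      rw [show alpha n U (m + 1) = (U (m + 1)).mulVec (alpha n U m) from rfl,
        Matrix.star_mulVec, Matrix.dotProduct_mulVec, Matrix.vecMul_vecMul, h1,
        Matrix.vecMul_one, ih]

lemma mulVec_gamma (M : Matrix ((Fin n → Bool) × (Fin L → Bool))
    ((Fin n → Bool) × (Fin L → Bool)) ℂ) (ℓ : ℕ) (p : (Fin n → Bool) × (Fin L → Bool)) :
    M.mulVec (gammaVec n L U ℓ) p = ∑ x, M p (x, clk L ℓ) * alpha n U ℓ x := by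
  rw [Matrix.mulVec, dotProduct, Fintype.sum_prod_type]
  simp [gammaVec, mul_ite, Finset.sum_ite_eq']

lemma gamma_dot (hU : ∀ ℓ, U ℓ ∈ Matrix.unitaryGroup (Fin n → Bool) ℂ)
    {i j : ℕ} (hi : i ≤ L) (hj : j ≤ L) :
    star (gammaVec n L U i) ⬝ᵥ gammaVec n L U j = if i = j then 1 else 0 := by
  by_cases h : i = j
  · subst h
    rw [if_pos rfl, ← alpha_norm hU i]
    rw [dotProduct, dotProduct, Fintype.sum_prod_type]
    simp [gammaVec, apply_ite (star : ℂ → ℂ), ite_mul, mul_ite, Finset.sum_ite_eq']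
  · rw [if_neg h]
    have hc : clk L i ≠ clk L j := fun hc => h (clk_inj hi hj hc)
    rw [dotProduct, Fintype.sum_prod_type]
    apply Finset.sum_eq_zero; intro x _
    apply Finset.sum_eq_zero; intro c _
    simp only [gammaVec, Pi.star_apply, apply_ite (star : ℂ → ℂ), star_zero]
    by_cases h1 : c = clk L i
    · rw [if_pos h1, if_neg (h1 ▸ hc), mul_zero]
    · rw [if_neg h1, zero_mul]

lemma Hclock_mulVec {ℓ : ℕ} (hℓ : ℓ ≤ L) :
    (Hclock n L).mulVec (gammaVec n L U ℓ) = 0 := by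
  funext p
  rw [mulVec_gamma]
  show _ = (0:ℂ)
  apply Finset.sum_eq_zero; intro x _
  have : Hclock n L p (x, clk L ℓ) = 0 := by
    show (∑ j ∈ Finset.range (L - 1), _ : ℂ) = 0
    apply Finset.sum_eq_zero; intro j hj
    rw [if_neg]
    rintro ⟨rfl, h1, h2⟩
    rw [vclk_clk hℓ] at h1 h2
    simp only [decide_eq_false_iff_not, decide_eq_true_eq] at h1 h2
    omega
  rw [this, zero_mul]

lemma Hinput_mulVec {ℓ : ℕ} (hℓ : ℓ ≤ L) :
    (Hinput n L).mulVec (gammaVec n L U ℓ) = 0 := by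
  funext p
  rw [mulVec_gamma]
  show _ = (0:ℂ)
  apply Finset.sum_eq_zero; intro x _
  by_cases hx : alpha n U ℓ x = 0
  · rw [hx, mul_zero]
  · have : Hinput n L p (x, clk L ℓ) = 0 := by
      show (∑ i : Fin n, _ : ℂ) = 0
      apply Finset.sum_eq_zero; intro i _
      rw [if_neg]
      rintro ⟨rfl, h1, h2⟩
      rw [vclk_clk hℓ] at h2
      simp only [decide_eq_false_iff_not] at h2
      have hℓ0 : ℓ = 0 := by omega
      subst hℓ0
      have hx0 : x = fun _ => false := by
        by_contra hco
        simp [alpha, hco] at hx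
      rw [hx0] at h1
      simp at h1
    rw [this, zero_mul]

lemma Hclockinit_mulVec {ℓ : ℕ} (hℓ : ℓ ≤ L) :
    (Hclockinit n L).mulVec (gammaVec n L U ℓ) =
      if 1 ≤ ℓ then gammaVec n L U ℓ else 0 := by
  funext p
  rw [mulVec_gamma]
  by_cases h1 : 1 ≤ ℓ
  · rw [if_pos h1]
    calc ∑ x, Hclockinit n L p (x, clk L ℓ) * alpha n U ℓ x
        = ∑ x, (if p.1 = x then (if p.2 = clk L ℓ then alpha n U ℓ x else 0) else 0) := by
          apply Finset.sum_congr rfl; intro x _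
          show (if p = (x, clk L ℓ) ∧ vclk p.2 0 = true then (1:ℂ) else 0) * _ = _
          by_cases h : p = (x, clk L ℓ)
          · have hv : vclk p.2 0 = true := by
              rw [h]
              show vclk (clk L ℓ) 0 = true
              rw [vclk_clk hℓ]
              simp only [decide_eq_true_eq]
              omega
            rw [if_pos ⟨h, hv⟩, one_mul, if_pos (congrArg Prod.fst h),
              if_pos (congrArg Prod.snd h)]
          · rw [if_neg (fun hc => h hc.1), zero_mul]
            by_cases h2 : p.1 = x
            · by_cases h3 : p.2 = clk L ℓ
              · exact absurd (Prod.ext h2 h3) h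
              · rw [if_pos h2, if_neg h3]
            · rw [if_neg h2]
      _ = gammaVec n L U ℓ p := by rw [Finset.sum_ite_eq]; simp [gammaVec]
  · rw [if_neg h1]
    show _ = (0:ℂ)
    have hℓ0 : ℓ = 0 := by omega
    subst hℓ0
    apply Finset.sum_eq_zero; intro x _
    have : Hclockinit n L p (x, clk L 0) = 0 := by
      show (if p = (x, clk L 0) ∧ vclk p.2 0 = true then (1:ℂ) else 0) = 0
      rw [if_neg]
      rintro ⟨rfl, h2⟩
      have h2' : vclk (clk L 0) 0 = true := h2
      rw [vclk_clk (by omega)] at h2'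
      simp at h2'
    rw [this, zero_mul]

set_option maxHeartbeats 1000000 in
lemma Hprop_mulVec (hU : ∀ k, U k ∈ Matrix.unitaryGroup (Fin n → Bool) ℂ)
    {ℓ' ℓ : ℕ} (h1 : 1 ≤ ℓ') (h2 : ℓ' ≤ L) (hℓ : ℓ ≤ L) :
    (Hprop n L U ℓ').mulVec (gammaVec n L U ℓ) =
      (if ℓ' = ℓ + 1 then gammaVec n L U ℓ - gammaVec n L U (ℓ + 1) else 0)
      + (if ℓ' = ℓ then gammaVec n L U ℓ - gammaVec n L U (ℓ - 1) else 0) := by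
  funext p
  rw [mulVec_gamma]
  have expand : ∀ x : Fin n → Bool,
      Hprop n L U ℓ' p (x, clk L ℓ) * alpha n U ℓ x =
      (if p.1 = x ∧ p.2 = clk L ℓ ∧ vclk p.2 ((ℓ' : ℤ) - 2) = true ∧
          vclk p.2 ((ℓ' : ℤ) - 1) = false ∧ vclk p.2 (ℓ' : ℤ) = false then (1:ℂ) else 0)
        * alpha n U ℓ x
      - (if vclk p.2 ((ℓ' : ℤ) - 2) = true ∧ vclk p.2 ((ℓ' : ℤ) - 1) = true ∧
            vclk p.2 (ℓ' : ℤ) = false ∧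
            vclk (clk L ℓ) ((ℓ' : ℤ) - 2) = true ∧ vclk (clk L ℓ) ((ℓ' : ℤ) - 1) = false ∧
            vclk (clk L ℓ) (ℓ' : ℤ) = false ∧
            agreeOff p.2 (clk L ℓ) {(ℓ' : ℤ) - 2, (ℓ' : ℤ) - 1, (ℓ' : ℤ)}
          then U ℓ' p.1 x else 0) * alpha n U ℓ x
      - (if vclk p.2 ((ℓ' : ℤ) - 2) = true ∧ vclk p.2 ((ℓ' : ℤ) - 1) = false ∧
            vclk p.2 (ℓ' : ℤ) = false ∧
            vclk (clk L ℓ) ((ℓ' : ℤ) - 2) = true ∧ vclk (clk L ℓ) ((ℓ' : ℤ) - 1) = true ∧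
            vclk (clk L ℓ) (ℓ' : ℤ) = false ∧
            agreeOff p.2 (clk L ℓ) {(ℓ' : ℤ) - 2, (ℓ' : ℤ) - 1, (ℓ' : ℤ)}
          then star (U ℓ' x p.1) else 0) * alpha n U ℓ x
      + (if p.1 = x ∧ p.2 = clk L ℓ ∧ vclk p.2 ((ℓ' : ℤ) - 2) = true ∧
          vclk p.2 ((ℓ' : ℤ) - 1) = true ∧ vclk p.2 (ℓ' : ℤ) = false then (1:ℂ) else 0)
        * alpha n U ℓ x := by
    intro x
    show (_ - _ - _ + _) * alpha n U ℓ x = _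
    ring
  rw [Finset.sum_congr rfl fun x _ => expand x]
  simp only [Finset.sum_add_distrib, Finset.sum_sub_distrib]
  have hA : (∑ x, (if p.1 = x ∧ p.2 = clk L ℓ ∧ vclk p.2 ((ℓ' : ℤ) - 2) = true ∧
          vclk p.2 ((ℓ' : ℤ) - 1) = false ∧ vclk p.2 (ℓ' : ℤ) = false then (1:ℂ) else 0)
        * alpha n U ℓ x)
      = if ℓ' = ℓ + 1 then gammaVec n L U ℓ p else 0 := by
    by_cases hc : p.2 = clk L ℓ
    · by_cases he : ℓ' = ℓ + 1
      · have hv2 : vclk p.2 ((ℓ' : ℤ) - 2) = true := by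
          rw [hc, vclk_clk hℓ]; simp only [decide_eq_true_eq]; omega
        have hv1 : vclk p.2 ((ℓ' : ℤ) - 1) = false := by
          rw [hc, vclk_clk hℓ]; simp only [decide_eq_false_iff_not]; omega
        have hv0 : vclk p.2 (ℓ' : ℤ) = false := by
          rw [hc, vclk_clk hℓ]; simp only [decide_eq_false_iff_not]; omega
        rw [if_pos he]
        calc (∑ x, (if p.1 = x ∧ p.2 = clk L ℓ ∧ vclk p.2 ((ℓ' : ℤ) - 2) = true ∧
              vclk p.2 ((ℓ' : ℤ) - 1) = false ∧ vclk p.2 (ℓ' : ℤ) = false then (1:ℂ) else 0)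
            * alpha n U ℓ x)
            = ∑ x, if p.1 = x then alpha n U ℓ x else 0 := by
              apply Finset.sum_congr rfl; intro x _
              by_cases hx : p.1 = x
              · rw [if_pos ⟨hx, hc, hv2, hv1, hv0⟩, one_mul, if_pos hx]
              · rw [if_neg (fun hcc => hx hcc.1), zero_mul, if_neg hx]
          _ = gammaVec n L U ℓ p := by rw [Finset.sum_ite_eq]; simp [gammaVec, hc]
      · rw [if_neg he]
        apply Finset.sum_eq_zero; intro x _
        rw [if_neg, zero_mul]
        rintro ⟨-, -, hv2, hv1, hv0⟩
        rw [hc, vclk_clk hℓ] at hv2 hv1 hv0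
        simp only [decide_eq_true_eq, decide_eq_false_iff_not] at hv2 hv1 hv0
        omega
    · have hz : (∑ x, (if p.1 = x ∧ p.2 = clk L ℓ ∧ vclk p.2 ((ℓ' : ℤ) - 2) = true ∧
          vclk p.2 ((ℓ' : ℤ) - 1) = false ∧ vclk p.2 (ℓ' : ℤ) = false then (1:ℂ) else 0)
        * alpha n U ℓ x) = 0 := by
        apply Finset.sum_eq_zero; intro x _
        rw [if_neg (fun hcc => hc hcc.2.1), zero_mul]
      rw [hz]
      split_ifs <;> simp [gammaVec, hc]
  have hD : (∑ x, (if p.1 = x ∧ p.2 = clk L ℓ ∧ vclk p.2 ((ℓ' : ℤ) - 2) = true ∧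
          vclk p.2 ((ℓ' : ℤ) - 1) = true ∧ vclk p.2 (ℓ' : ℤ) = false then (1:ℂ) else 0)
        * alpha n U ℓ x)
      = if ℓ' = ℓ then gammaVec n L U ℓ p else 0 := by
    by_cases hc : p.2 = clk L ℓ
    · by_cases he : ℓ' = ℓ
      · have hv2 : vclk p.2 ((ℓ' : ℤ) - 2) = true := by
          rw [hc, vclk_clk hℓ]; simp only [decide_eq_true_eq]; omega
        have hv1 : vclk p.2 ((ℓ' : ℤ) - 1) = true := by
          rw [hc, vclk_clk hℓ]; simp only [decide_eq_true_eq]; omega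
        have hv0 : vclk p.2 (ℓ' : ℤ) = false := by
          rw [hc, vclk_clk hℓ]; simp only [decide_eq_false_iff_not]; omega
        rw [if_pos he]
        calc (∑ x, (if p.1 = x ∧ p.2 = clk L ℓ ∧ vclk p.2 ((ℓ' : ℤ) - 2) = true ∧
              vclk p.2 ((ℓ' : ℤ) - 1) = true ∧ vclk p.2 (ℓ' : ℤ) = false then (1:ℂ) else 0)
            * alpha n U ℓ x)
            = ∑ x, if p.1 = x then alpha n U ℓ x else 0 := by
              apply Finset.sum_congr rfl; intro x _
              by_cases hx : p.1 = x
              · rw [if_pos ⟨hx, hc, hv2, hv1, hv0⟩, one_mul, if_pos hx]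
              · rw [if_neg (fun hcc => hx hcc.1), zero_mul, if_neg hx]
          _ = gammaVec n L U ℓ p := by rw [Finset.sum_ite_eq]; simp [gammaVec, hc]
      · rw [if_neg he]
        apply Finset.sum_eq_zero; intro x _
        rw [if_neg, zero_mul]
        rintro ⟨-, -, hv2, hv1, hv0⟩
        rw [hc, vclk_clk hℓ] at hv2 hv1 hv0
        simp only [decide_eq_true_eq, decide_eq_false_iff_not] at hv2 hv1 hv0
        omega
    · have hz : (∑ x, (if p.1 = x ∧ p.2 = clk L ℓ ∧ vclk p.2 ((ℓ' : ℤ) - 2) = true ∧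
          vclk p.2 ((ℓ' : ℤ) - 1) = true ∧ vclk p.2 (ℓ' : ℤ) = false then (1:ℂ) else 0)
        * alpha n U ℓ x) = 0 := by
        apply Finset.sum_eq_zero; intro x _
        rw [if_neg (fun hcc => hc hcc.2.1), zero_mul]
      rw [hz]
      split_ifs <;> simp [gammaVec, hc]
  have hB : (∑ x, (if vclk p.2 ((ℓ' : ℤ) - 2) = true ∧ vclk p.2 ((ℓ' : ℤ) - 1) = true ∧
            vclk p.2 (ℓ' : ℤ) = false ∧
            vclk (clk L ℓ) ((ℓ' : ℤ) - 2) = true ∧ vclk (clk L ℓ) ((ℓ' : ℤ) - 1) = false ∧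
            vclk (clk L ℓ) (ℓ' : ℤ) = false ∧
            agreeOff p.2 (clk L ℓ) {(ℓ' : ℤ) - 2, (ℓ' : ℤ) - 1, (ℓ' : ℤ)}
          then U ℓ' p.1 x else 0) * alpha n U ℓ x)
      = if ℓ' = ℓ + 1 then gammaVec n L U (ℓ + 1) p else 0 := by
    by_cases he : ℓ' = ℓ + 1
    · subst he
      rw [if_pos rfl]
      by_cases hp : p.2 = clk L (ℓ + 1)
      · have hp2 : vclk p.2 (((ℓ+1 : ℕ) : ℤ) - 2) = true := by
          rw [hp, vclk_clk h2]; simp only [decide_eq_true_eq]; push_cast; omega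
        have hp1 : vclk p.2 (((ℓ+1 : ℕ) : ℤ) - 1) = true := by
          rw [hp, vclk_clk h2]; simp only [decide_eq_true_eq]; push_cast; omega
        have hp0 : vclk p.2 ((ℓ+1 : ℕ) : ℤ) = false := by
          rw [hp, vclk_clk h2]; simp only [decide_eq_false_iff_not]; push_cast; omega
        have hq2 : vclk (clk L ℓ) (((ℓ+1 : ℕ) : ℤ) - 2) = true := by
          rw [vclk_clk hℓ]; simp only [decide_eq_true_eq]; push_cast; omega
        have hq1 : vclk (clk L ℓ) (((ℓ+1 : ℕ) : ℤ) - 1) = false := by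
          rw [vclk_clk hℓ]; simp only [decide_eq_false_iff_not]; push_cast; omega
        have hq0 : vclk (clk L ℓ) ((ℓ+1 : ℕ) : ℤ) = false := by
          rw [vclk_clk hℓ]; simp only [decide_eq_false_iff_not]; push_cast; omega
        have hag : agreeOff p.2 (clk L ℓ)
            {((ℓ+1 : ℕ) : ℤ) - 2, ((ℓ+1 : ℕ) : ℤ) - 1, ((ℓ+1 : ℕ) : ℤ)} := by
          rw [hp]; intro j hj
          simp only [Finset.mem_insert, Finset.mem_singleton] at hj
          show decide _ = decide _
          simp only [decide_eq_decide]
          push_cast at hj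
          omega
        have step : ∀ x, (if vclk p.2 (((ℓ+1:ℕ) : ℤ) - 2) = true ∧ vclk p.2 (((ℓ+1:ℕ) : ℤ) - 1) = true ∧
            vclk p.2 ((ℓ+1:ℕ) : ℤ) = false ∧
            vclk (clk L ℓ) (((ℓ+1:ℕ) : ℤ) - 2) = true ∧ vclk (clk L ℓ) (((ℓ+1:ℕ) : ℤ) - 1) = false ∧
            vclk (clk L ℓ) ((ℓ+1:ℕ) : ℤ) = false ∧
            agreeOff p.2 (clk L ℓ) {((ℓ+1:ℕ) : ℤ) - 2, ((ℓ+1:ℕ) : ℤ) - 1, ((ℓ+1:ℕ) : ℤ)}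
          then U (ℓ+1) p.1 x else 0) * alpha n U ℓ x = U (ℓ+1) p.1 x * alpha n U ℓ x := by
          intro x
          rw [if_pos ⟨hp2, hp1, hp0, hq2, hq1, hq0, hag⟩]
        rw [Finset.sum_congr rfl fun x _ => step x]
        simp [gammaVec, hp, alpha, Matrix.mulVec, dotProduct]
      · have hz : gammaVec n L U (ℓ + 1) p = 0 := by simp [gammaVec, hp]
        rw [hz]
        apply Finset.sum_eq_zero; intro x _
        rw [if_neg, zero_mul]
        rintro ⟨ht, hb, hf, -, -, -, ha⟩
        exact hp (by
          have := clock_det (m := ℓ) h1 h2 (Or.inl rfl) ht hb hf ha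
          simpa using this)
    · rw [if_neg he]
      apply Finset.sum_eq_zero; intro x _
      rw [if_neg, zero_mul]
      rintro ⟨-, -, -, hq2, hq1, hq0, -⟩
      rw [vclk_clk hℓ] at hq2 hq1 hq0
      simp only [decide_eq_true_eq, decide_eq_false_iff_not] at hq2 hq1 hq0
      omega
  have hC : (∑ x, (if vclk p.2 ((ℓ' : ℤ) - 2) = true ∧ vclk p.2 ((ℓ' : ℤ) - 1) = false ∧
            vclk p.2 (ℓ' : ℤ) = false ∧
            vclk (clk L ℓ) ((ℓ' : ℤ) - 2) = true ∧ vclk (clk L ℓ) ((ℓ' : ℤ) - 1) = true ∧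
            vclk (clk L ℓ) (ℓ' : ℤ) = false ∧
            agreeOff p.2 (clk L ℓ) {(ℓ' : ℤ) - 2, (ℓ' : ℤ) - 1, (ℓ' : ℤ)}
          then star (U ℓ' x p.1) else 0) * alpha n U ℓ x)
      = if ℓ' = ℓ then gammaVec n L U (ℓ - 1) p else 0 := by
    by_cases he : ℓ' = ℓ
    · subst he
      rw [if_pos rfl]
      obtain ⟨m, rfl⟩ : ∃ m, ℓ' = m + 1 := ⟨ℓ' - 1, by omega⟩
      have hmL : m ≤ L := by omega
      by_cases hp : p.2 = clk L m
      · have hp2 : vclk p.2 (((m+1 : ℕ) : ℤ) - 2) = true := by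
          rw [hp, vclk_clk hmL]; simp only [decide_eq_true_eq]; push_cast; omega
        have hp1 : vclk p.2 (((m+1 : ℕ) : ℤ) - 1) = false := by
          rw [hp, vclk_clk hmL]; simp only [decide_eq_false_iff_not]; push_cast; omega
        have hp0 : vclk p.2 ((m+1 : ℕ) : ℤ) = false := by
          rw [hp, vclk_clk hmL]; simp only [decide_eq_false_iff_not]; push_cast; omega
        have hq2 : vclk (clk L (m+1)) (((m+1 : ℕ) : ℤ) - 2) = true := by
          rw [vclk_clk hℓ]; simp only [decide_eq_true_eq]; push_cast; omega
        have hq1 : vclk (clk L (m+1)) (((m+1 : ℕ) : ℤ) - 1) = true := by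
          rw [vclk_clk hℓ]; simp only [decide_eq_true_eq]; push_cast; omega
        have hq0 : vclk (clk L (m+1)) ((m+1 : ℕ) : ℤ) = false := by
          rw [vclk_clk hℓ]; simp only [decide_eq_false_iff_not]; push_cast; omega
        have hag : agreeOff p.2 (clk L (m+1))
            {((m+1 : ℕ) : ℤ) - 2, ((m+1 : ℕ) : ℤ) - 1, ((m+1 : ℕ) : ℤ)} := by
          rw [hp]; intro j hj
          simp only [Finset.mem_insert, Finset.mem_singleton] at hj
          show decide _ = decide _
          simp only [decide_eq_decide]
          push_cast at hj
          omega
        have hUu : (U (m+1))ᴴ * U (m+1) = 1 := by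
          have := Matrix.mem_unitaryGroup_iff'.mp (hU (m + 1))
          simpa [Matrix.star_eq_conjTranspose] using this
        have step : ∀ x, (if vclk p.2 (((m+1:ℕ) : ℤ) - 2) = true ∧ vclk p.2 (((m+1:ℕ) : ℤ) - 1) = false ∧
            vclk p.2 ((m+1:ℕ) : ℤ) = false ∧
            vclk (clk L (m+1)) (((m+1:ℕ) : ℤ) - 2) = true ∧ vclk (clk L (m+1)) (((m+1:ℕ) : ℤ) - 1) = true ∧
            vclk (clk L (m+1)) ((m+1:ℕ) : ℤ) = false ∧
            agreeOff p.2 (clk L (m+1)) {((m+1:ℕ) : ℤ) - 2, ((m+1:ℕ) : ℤ) - 1, ((m+1:ℕ) : ℤ)}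
          then star (U (m+1) x p.1) else 0) * alpha n U (m+1) x
            = (U (m+1))ᴴ p.1 x * alpha n U (m+1) x := by
          intro x
          rw [if_pos ⟨hp2, hp1, hp0, hq2, hq1, hq0, hag⟩, Matrix.conjTranspose_apply]
        rw [Finset.sum_congr rfl fun x _ => step x]
        calc ∑ x, (U (m+1))ᴴ p.1 x * alpha n U (m+1) x
            = ((U (m+1))ᴴ.mulVec (alpha n U (m+1))) p.1 := rfl
          _ = alpha n U m p.1 := by
              rw [show alpha n U (m+1) = (U (m+1)).mulVec (alpha n U m) from rfl,
                Matrix.mulVec_mulVec, hUu, Matrix.one_mulVec]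
          _ = gammaVec n L U (m + 1 - 1) p := by simp [gammaVec, hp]
      · have hz : gammaVec n L U (m + 1 - 1) p = 0 := by simp [gammaVec, hp]
        rw [hz]
        apply Finset.sum_eq_zero; intro x _
        rw [if_neg, zero_mul]
        rintro ⟨ht, hb, hf, -, -, -, ha⟩
        exact hp (by
          have := clock_det (m := m + 1) h1 h2 (Or.inr rfl) ht hb hf ha
          simpa using this)
    · rw [if_neg he]
      apply Finset.sum_eq_zero; intro x _
      rw [if_neg, zero_mul]
      rintro ⟨-, -, -, hq2, hq1, hq0, -⟩
      rw [vclk_clk hℓ] at hq2 hq1 hq0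
      simp only [decide_eq_true_eq, decide_eq_false_iff_not] at hq2 hq1 hq0
      omega
  rw [hA, hB, hC, hD]
  simp only [Pi.add_apply, Pi.sub_apply, Pi.zero_apply, apply_ite (fun f :
    ((Fin n → Bool) × (Fin L → Bool)) → ℂ => f p)]
  split_ifs <;> ring

lemma sum_mulVec {ι : Type*} (s : Finset ι)
    (A : ι → Matrix ((Fin n → Bool) × (Fin L → Bool)) ((Fin n → Bool) × (Fin L → Bool)) ℂ)
    (v : (Fin n → Bool) × (Fin L → Bool) → ℂ) :
    (∑ i ∈ s, A i).mulVec v = ∑ i ∈ s, (A i).mulVec v := by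
  induction s using Finset.cons_induction with
  | empty => simp [Matrix.mulVec]
  | cons a s ha ih => simp [Matrix.add_mulVec, ih]

lemma Hs_mulVec (hU : ∀ k, U k ∈ Matrix.unitaryGroup (Fin n → Bool) ℂ)
    {ℓ : ℕ} (hℓ : ℓ ≤ L) (s : ℝ) :
    (Hs n L U s).mulVec (gammaVec n L U ℓ) =
      ((1 - s : ℝ) : ℂ) • (if 1 ≤ ℓ then gammaVec n L U ℓ else 0)
      + (s : ℂ) • ((1 / 2 : ℂ) •
          ((if ℓ < L then gammaVec n L U ℓ - gammaVec n L U (ℓ + 1) else 0)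
            + (if 1 ≤ ℓ then gammaVec n L U ℓ - gammaVec n L U (ℓ - 1) else 0))) := by
  unfold Hs Hinit Hfinal
  rw [Matrix.add_mulVec, Matrix.smul_mulVec, Matrix.smul_mulVec,
    Matrix.add_mulVec, Matrix.add_mulVec, Hclockinit_mulVec hℓ, Hinput_mulVec hℓ,
    Hclock_mulVec hℓ, add_zero, add_zero, Matrix.add_mulVec, Matrix.add_mulVec,
    Hinput_mulVec hℓ, Hclock_mulVec hℓ, add_zero, add_zero,
    Matrix.smul_mulVec, sum_mulVec]
  congr 2
  rw [Finset.sum_congr rfl fun k hk => Hprop_mulVec hU (Finset.mem_Icc.mp hk).1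
    (Finset.mem_Icc.mp hk).2 hℓ]
  rw [Finset.sum_add_distrib, Finset.sum_ite_eq' (Finset.Icc 1 L) (ℓ + 1),
    Finset.sum_ite_eq' (Finset.Icc 1 L) ℓ]
  simp only [Finset.mem_Icc]
  have e1 : (if 1 ≤ ℓ + 1 ∧ ℓ + 1 ≤ L then gammaVec n L U ℓ - gammaVec n L U (ℓ + 1) else 0)
      = (if ℓ < L then gammaVec n L U ℓ - gammaVec n L U (ℓ + 1) else 0) := by
    by_cases h : ℓ < L
    · rw [if_pos ⟨by omega, by omega⟩, if_pos h]
    · rw [if_neg (by omega), if_neg h]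
  have e2 : (if 1 ≤ ℓ ∧ ℓ ≤ L then gammaVec n L U ℓ - gammaVec n L U (ℓ - 1) else 0)
      = (if 1 ≤ ℓ then gammaVec n L U ℓ - gammaVec n L U (ℓ - 1) else 0) := by
    by_cases h : 1 ≤ ℓ
    · rw [if_pos ⟨h, hℓ⟩, if_pos h]
    · rw [if_neg (by omega), if_neg h]
  rw [e1, e2]

end Helpers

/-- For every `s ∈ [0,1]`, `H(s)` maps `S₀ = span{|γ₀⟩, …, |γ_L⟩}` into itself, and in
the orthonormal basis `|γ₀⟩, …, |γ_L⟩` the restriction of `H(s)` to `S₀` is the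
`(L+1)×(L+1)` matrix `(1-s)·diag(0,1,…,1) + s·A`. -/
theorem Hs_restriction_to_history_subspace (n L : ℕ) (hL : 1 ≤ L)
    (U : ℕ → Matrix (Fin n → Bool) (Fin n → Bool) ℂ)
    (hU : ∀ ℓ, U ℓ ∈ Matrix.unitaryGroup (Fin n → Bool) ℂ)
    (s : ℝ) (hs0 : 0 ≤ s) (hs1 : s ≤ 1) :
    (∀ ℓ : Fin (L + 1),
      (Hs n L U s).mulVec (gammaVec n L U (ℓ : ℕ)) ∈
        Submodule.span ℂ (Set.range (fun m : Fin (L + 1) => gammaVec n L U (m : ℕ)))) ∧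
    (∀ i j : Fin (L + 1),
      star (gammaVec n L U (i : ℕ)) ⬝ᵥ (Hs n L U s).mulVec (gammaVec n L U (j : ℕ)) =
        ((1 - s : ℝ) : ℂ) * (if i = j ∧ i ≠ 0 then 1 else 0) +
        (s : ℂ) * (if i = j then (if (i : ℕ) = 0 ∨ (i : ℕ) = L then 1 / 2 else 1)
          else if (i : ℕ) + 1 = (j : ℕ) ∨ (j : ℕ) + 1 = (i : ℕ) then -(1 / 2) else 0)) := by
  constructor
  · intro ℓ
    have hℓ : (ℓ : ℕ) ≤ L := Nat.lt_succ_iff.mp ℓ.isLt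
    rw [Hs_mulVec hU hℓ s]
    have hmem : ∀ m : ℕ, m ≤ L → gammaVec n L U m ∈
        Submodule.span ℂ (Set.range fun m : Fin (L + 1) => gammaVec n L U (m : ℕ)) := by
      intro m hm
      apply Submodule.subset_span
      exact ⟨⟨m, by omega⟩, rfl⟩
    apply Submodule.add_mem
    · apply Submodule.smul_mem
      split_ifs
      · exact hmem _ hℓ
      · exact Submodule.zero_mem _
    · apply Submodule.smul_mem
      apply Submodule.smul_mem
      apply Submodule.add_mem
      · split_ifs with h
        · exact Submodule.sub_mem _ (hmem _ hℓ) (hmem _ (by omega))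
        · exact Submodule.zero_mem _
      · split_ifs with h
        · exact Submodule.sub_mem _ (hmem _ hℓ) (hmem _ (by omega))
        · exact Submodule.zero_mem _
  · intro i j
    have hi : (i : ℕ) ≤ L := Nat.lt_succ_iff.mp i.isLt
    have hj : (j : ℕ) ≤ L := Nat.lt_succ_iff.mp j.isLt
    rw [Hs_mulVec hU hj s]
    by_cases h1j : 1 ≤ (j : ℕ) <;> by_cases hjL : (j : ℕ) < L
    · simp only [if_pos h1j, if_pos hjL]
      simp only [dotProduct_add, dotProduct_sub, dotProduct_smul,
        dotProduct_zero, smul_eq_mul]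
      rw [gamma_dot hU hi hj, gamma_dot hU hi (show (j : ℕ) + 1 ≤ L by omega),
        gamma_dot hU hi (show (j : ℕ) - 1 ≤ L by omega)]
      simp only [ne_eq, Fin.ext_iff, Fin.val_zero]
      split_ifs <;> first | ring1 | (exfalso; omega)
    · simp only [if_pos h1j, if_neg hjL]
      simp only [dotProduct_add, dotProduct_sub, dotProduct_smul,
        dotProduct_zero, smul_eq_mul, zero_add]
      rw [gamma_dot hU hi hj, gamma_dot hU hi (show (j : ℕ) - 1 ≤ L by omega)]
      simp only [ne_eq, Fin.ext_iff, Fin.val_zero]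
      split_ifs <;> first | ring1 | (exfalso; omega)
    · simp only [if_neg h1j, if_pos hjL]
      simp only [dotProduct_add, dotProduct_sub, dotProduct_smul,
        dotProduct_zero, smul_eq_mul, add_zero]
      rw [gamma_dot hU hi hj, gamma_dot hU hi (show (j : ℕ) + 1 ≤ L by omega)]
      simp only [ne_eq, Fin.ext_iff, Fin.val_zero]
      split_ifs <;> first | ring1 | (exfalso; omega)
    · exfalso; omega
end
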